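/- arXiv:1006.2852 — 5 statements merged into one kernel-verified Lean document; each statement's English description precedes it below -/
import Mathlib

section
/- Let g : ℝ^d → ℝ be a C² function, strictly convex in the sense that h ≤ ∇_u∇_u g(x) ≤ H for all unit vectors u and all x (with 0 < h < H). Let f : ℝ^d → ℝ be a convex piecewise-affine function with |f(x) − g(x)| < ε for all x. Then for any region Δ on which f is affine with gradient m_Δ, and any x₀ ∈ Δ, one has ‖m_Δ − ∇g(x₀)‖ ≤ 2√(ε·H). -/
open Set
open scoped RealInnerProductSpace

noncomputable section

variable {d : ℕ}

/-- A polytope: a compact intersection of finitely many half-spaces. -/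
def IsPolytope (S : Set (EuclideanSpace ℝ (Fin d))) : Prop :=
  IsCompact S ∧ ∃ (n : ℕ) (m : Fin n → EuclideanSpace ℝ (Fin d)) (c : Fin n → ℝ),
    S = {x | ∀ i, c i ≤ ⟪m i, x⟫}

/-- A closed face of a set. -/
def IsClosedFace (F S : Set (EuclideanSpace ℝ (Fin d))) : Prop :=
  F = S ∨ ∃ (m : EuclideanSpace ℝ (Fin d)) (c : ℝ),
    (∀ x ∈ S, c ≤ ⟪m, x⟫) ∧ F = S ∩ {x | ⟪m, x⟫ = c}

/-- A polytopal complex. -/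
def IsPolytopalComplex (𝒞 : Set (Set (EuclideanSpace ℝ (Fin d)))) : Prop :=
  (∀ Δ ∈ 𝒞, IsPolytope Δ) ∧
  (∀ x : EuclideanSpace ℝ (Fin d), ∃ U ∈ nhds x, {Δ ∈ 𝒞 | (Δ ∩ U).Nonempty}.Finite) ∧
  (∀ Δ ∈ 𝒞, ∀ F : Set (EuclideanSpace ℝ (Fin d)), IsClosedFace F Δ → F ∈ 𝒞) ∧
  (∀ Δ ∈ 𝒞, ∀ Δ' ∈ 𝒞, (Δ ∩ Δ').Nonempty →
    IsClosedFace (Δ ∩ Δ') Δ ∧ IsClosedFace (Δ ∩ Δ') Δ')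

/-- A polytopal decomposition of `ℝ^d`. -/
def IsPolytopalDecomp (𝒞 : Set (Set (EuclideanSpace ℝ (Fin d)))) : Prop :=
  IsPolytopalComplex 𝒞 ∧ ⋃₀ 𝒞 = univ

/-- A continuous polytopal (piecewise-affine) function on `ℝ^d`. -/
def IsPolytopalFn (f : EuclideanSpace ℝ (Fin d) → ℝ) : Prop :=
  Continuous f ∧ ∃ 𝒞, IsPolytopalDecomp 𝒞 ∧
    ∀ Δ ∈ 𝒞, ∃ (m : EuclideanSpace ℝ (Fin d)) (c : ℝ), ∀ x ∈ Δ, f x = ⟪m, x⟫ + c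

/-!
On the open set `interior Δ` the convex function `f` coincides with the affine function
`ℓ x = ⟪m, x⟫ + c`; convexity then forces `ℓ ≤ f` everywhere. The Hessian bound gives the
Taylor estimate `g (x₀ + v) ≤ g x₀ + ⟪∇g x₀, v⟫ + H‖v‖²/2`, so with `|f - g| < ε` at `x₀` and
`x₀ + v` we get `⟪m - ∇g x₀, v⟫ ≤ 2ε + H‖v‖²/2` for every `v`. Choosing
`v = (m - ∇g x₀) / H` yields `‖m - ∇g x₀‖² ≤ 4εH`.
-/

open Filter Topology

theorem ConvexOn.linear_add_const_le_of_eqOn {E : Type*} [AddCommGroup E] [Module ℝ E]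
    [TopologicalSpace E] [ContinuousAdd E] [ContinuousSMul ℝ E] {f : E → ℝ}
    (hf : ConvexOn ℝ univ f) {s : Set E} (hs : (interior s).Nonempty) (L : E →ₗ[ℝ] ℝ) (c : ℝ)
    (hfs : ∀ x ∈ s, f x = L x + c) (x : E) : L x + c ≤ f x := by
  obtain ⟨y, hy⟩ := hs
  have hlim : Tendsto (fun t : ℝ => (1 - t) • y + t • x) (𝓝[>] 0) (𝓝 y) := by
    have : Continuous (fun t : ℝ => (1 - t) • y + t • x) := by fun_prop
    simpa using (this.tendsto 0).mono_left nhdsWithin_le_nhds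
  obtain ⟨t, hts, ht⟩ :=
    ((hlim.eventually (mem_interior_iff_mem_nhds.1 hy)).and (Ioo_mem_nhdsGT one_pos)).exists
  have hconv := hf.2 (mem_univ y) (mem_univ x) (sub_nonneg.2 ht.2.le) ht.1.le (sub_add_cancel 1 t)
  rw [hfs _ hts, hfs y (interior_subset hy), map_add, map_smul, map_smul,
    smul_eq_mul, smul_eq_mul, smul_eq_mul, smul_eq_mul] at hconv
  nlinarith [ht.1]

theorem le_add_deriv_add_half_of_deriv2_le {φ φ' φ'' : ℝ → ℝ} {K : ℝ}
    (hφ : ∀ t, HasDerivAt φ (φ' t) t) (hφ' : ∀ t, HasDerivAt φ' (φ'' t) t)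
    (hK : ∀ t, φ'' t ≤ K) : φ 1 ≤ φ 0 + φ' 0 + K / 2 := by
  set ψ : ℝ → ℝ := fun t => φ 0 + φ' 0 * t + K / 2 * t ^ 2 - φ t
  set ψ' : ℝ → ℝ := fun t => φ' 0 + K * t - φ' t
  have hψ : ∀ t, HasDerivAt ψ (ψ' t) t := fun t => by
    refine ((((hasDerivAt_id t).const_mul (φ' 0)).const_add (φ 0)).add
      ((hasDerivAt_pow 2 t).const_mul (K / 2)) |>.sub (hφ t)).congr_deriv ?_
    simp only [ψ']; ring
  have hψ'_mono : Monotone ψ' := by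
    refine monotone_of_hasDerivAt_nonneg (f' := fun t => K - φ'' t) (fun t => ?_)
      (fun t => sub_nonneg.2 (hK t))
    refine ((((hasDerivAt_id t).const_mul K).const_add (φ' 0)).sub (hφ' t)).congr_deriv ?_
    simp
  obtain ⟨τ, hτ, hτψ⟩ := exists_hasDerivAt_eq_slope ψ ψ' one_pos
    (fun t _ => (hψ t).continuousAt.continuousWithinAt) (fun t _ => hψ t)
  have hψ'0 : ψ' 0 = 0 := by simp [ψ']
  have hslope : ψ 1 - ψ 0 = ψ' τ := by rw [hτψ, sub_zero, div_one]
  have hψ01 : 0 ≤ ψ 1 - ψ 0 := hslope ▸ hψ'0 ▸ hψ'_mono hτ.1.le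
  simp only [ψ] at hψ01
  norm_num at hψ01
  linarith

variable {E : Type*} [NormedAddCommGroup E] [NormedSpace ℝ E]

theorem ContinuousMultilinearMap.apply_two_self_le_mul_norm_sq
    (Q : ContinuousMultilinearMap ℝ (fun _ : Fin 2 => E) ℝ) {K : ℝ}
    (hQ : ∀ u : E, ‖u‖ = 1 → Q ![u, u] ≤ K) (v : E) : Q ![v, v] ≤ K * ‖v‖ ^ 2 := by
  rcases eq_or_ne v 0 with rfl | hv
  · simp [Q.map_coord_zero (m := ![0, 0]) 0 rfl]
  have hsplit : ![v, v] = fun i => ‖v‖ • ![‖v‖⁻¹ • v, ‖v‖⁻¹ • v] i := by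
    ext i : 1
    fin_cases i <;> simp [smul_smul, mul_inv_cancel₀ (norm_ne_zero_iff.2 hv)]
  rw [hsplit, Q.map_smul_univ, smul_eq_mul, Fin.prod_univ_two, ← sq, mul_comm]
  exact mul_le_mul_of_nonneg_right (hQ _ (norm_smul_inv_norm hv)) (by positivity)

theorem ContDiff.le_add_fderiv_add_half_of_iteratedFDeriv_two_le {g : E → ℝ}
    (hg : ContDiff ℝ 2 g) {v : E} {K : ℝ} (hK : ∀ x, iteratedFDeriv ℝ 2 g x ![v, v] ≤ K)
    (x : E) : g (x + v) ≤ g x + fderiv ℝ g x v + K / 2 := by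
  have hline : ∀ t : ℝ, HasDerivAt (fun t : ℝ => x + t • v) v t := fun t => by
    simpa using ((hasDerivAt_id t).smul_const v).const_add x
  have hg1 : Differentiable ℝ g := hg.differentiable (by norm_num)
  have hg2 : Differentiable ℝ (fderiv ℝ g) :=
    (hg.fderiv_right (m := 1) (by norm_num)).differentiable (by norm_num)
  have := le_add_deriv_add_half_of_deriv2_le (φ := fun t => g (x + t • v))
    (φ' := fun t => fderiv ℝ g (x + t • v) v)
    (φ'' := fun t => iteratedFDeriv ℝ 2 g (x + t • v) ![v, v])
    (fun t => (hg1 _).hasFDerivAt.comp_hasDerivAt t (hline t))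
    (fun t => by
      simpa [iteratedFDeriv_two_apply] using
        ((hg2 _).hasFDerivAt.comp_hasDerivAt t (hline t)).clm_apply (hasDerivAt_const t v))
    (fun t => hK _)
  simpa using this

theorem norm_sq_le_of_forall_inner_le {F : Type*} [NormedAddCommGroup F] [InnerProductSpace ℝ F]
    {w : F} {a b : ℝ} (hb : 0 < b) (h : ∀ v, ⟪w, v⟫ ≤ a + b * ‖v‖ ^ 2 / 2) :
    ‖w‖ ^ 2 ≤ 2 * a * b := by
  have := h (b⁻¹ • w)
  rw [real_inner_smul_right, real_inner_self_eq_norm_sq, norm_smul, Real.norm_eq_abs,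
    abs_of_pos (inv_pos.2 hb)] at this
  field_simp at this
  nlinarith

theorem stmt1_general (g f : EuclideanSpace ℝ (Fin d) → ℝ) (h H ε : ℝ)
    (hg : ContDiff ℝ 2 g) (h0 : 0 < h) (hH : h < H)
    (hdd : ∀ u : EuclideanSpace ℝ (Fin d), ‖u‖ = 1 → ∀ x,
      h ≤ iteratedFDeriv ℝ 2 g x ![u, u] ∧ iteratedFDeriv ℝ 2 g x ![u, u] ≤ H)
    (hfconv : ConvexOn ℝ Set.univ f)
    (hfg : ∀ x, |f x - g x| < ε)
    (Δ : Set (EuclideanSpace ℝ (Fin d))) (hΔint : (interior Δ).Nonempty)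
    (m : EuclideanSpace ℝ (Fin d)) (c : ℝ) (hfa : ∀ x ∈ Δ, f x = ⟪m, x⟫ + c) :
    ∀ x₀ ∈ Δ, ‖m - gradient g x₀‖ ≤ 2 * Real.sqrt (ε * H) := by
  intro x₀ hx₀
  have hkey : ∀ v, ⟪m - gradient g x₀, v⟫ ≤ 2 * ε + H * ‖v‖ ^ 2 / 2 := by
    intro v
    have htaylor := hg.le_add_fderiv_add_half_of_iteratedFDeriv_two_le (fun x =>
      (iteratedFDeriv ℝ 2 g x).apply_two_self_le_mul_norm_sq (fun u hu => (hdd u hu x).2) v) x₀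
    have hsupport := hfconv.linear_add_const_le_of_eqOn hΔint (innerₛₗ ℝ m) c hfa (x₀ + v)
    simp only [innerₛₗ_apply_apply, inner_add_right] at hsupport
    have hclose₀ := abs_sub_lt_iff.1 (hfg x₀)
    have hclose₁ := abs_sub_lt_iff.1 (hfg (x₀ + v))
    rw [inner_sub_left, inner_gradient_left]
    linarith [hfa x₀ hx₀]
  have hsq := norm_sq_le_of_forall_inner_le (h0.trans hH) hkey
  calc ‖m - gradient g x₀‖ ≤ Real.sqrt (2 ^ 2 * (ε * H)) := Real.le_sqrt_of_sq_le (by linarith)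
    _ = 2 * Real.sqrt (ε * H) := by rw [Real.sqrt_mul (by norm_num), Real.sqrt_sq zero_le_two]

/-- Lemma 3.6 (gradient estimate): if a convex piecewise-affine `f` is uniformly
`ε`-close to a uniformly strictly convex `C²` function `g`, then on any full-dimensional
region where `f` is affine with gradient `m`, the gradient `m` differs from `∇g` by at
most `2√(εH)`. -/
theorem stmt1 (g f : EuclideanSpace ℝ (Fin d) → ℝ) (h H ε : ℝ)
    (hg : ContDiff ℝ 2 g) (h0 : 0 < h) (hH : h < H)
    (hdd : ∀ u : EuclideanSpace ℝ (Fin d), ‖u‖ = 1 → ∀ x,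
      h ≤ iteratedFDeriv ℝ 2 g x ![u, u] ∧ iteratedFDeriv ℝ 2 g x ![u, u] ≤ H)
    (hfconv : ConvexOn ℝ Set.univ f) (hfpoly : IsPolytopalFn f)
    (hfg : ∀ x, |f x - g x| < ε)
    (Δ : Set (EuclideanSpace ℝ (Fin d))) (hΔint : (interior Δ).Nonempty)
    (m : EuclideanSpace ℝ (Fin d)) (c : ℝ) (hfa : ∀ x ∈ Δ, f x = ⟪m, x⟫ + c) :
    ∀ x₀ ∈ Δ, ‖m - gradient g x₀‖ ≤ 2 * Real.sqrt (ε * H) :=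
  stmt1_general g f h H ε hg h0 hH hdd hfconv hfg Δ hΔint m c hfa
end
end

section
/- Let g : ℝ^d → ℝ be C² with h ≤ ∇_u∇_u g ≤ H everywhere for all unit vectors u (0 < h ≤ H), and let f be a convex piecewise-affine function with |f − g| < ε everywhere. Then any region Δ on which f is affine has Euclidean diameter at most (4/h)·√(ε·H); in particular Δ is bounded. -/
/-!
The affine function `ℓ x = ⟪m, x⟫ + c` agrees with the convex function `f` on an open set, hence
supports it: `ℓ ≤ f` everywhere. So for `x, x' ∈ Δ` the value of `f` at the midpoint is at least the
average of `f x` and `f x'`. The lower Hessian bound makes `g` `h`-strongly convex, so `g` at the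
midpoint is at least `h ‖x - x'‖² / 8` below the average of `g x` and `g x'`. As `f` and `g` differ
by less than `ε` at the three points, `h ‖x - x'‖² ≤ 16 ε`, and `16 ε / h ≤ (4 / h)² ε H`.
-/

open Set
open scoped RealInnerProductSpace

noncomputable section

variable {d : ℕ}

lemma ConvexOn.le_of_concaveOn_of_eqOn {F : Type*} [AddCommGroup F] [TopologicalSpace F]
    [Module ℝ F] [ContinuousAdd F] [ContinuousSMul ℝ F] {f ℓ : F → ℝ} {s : Set F}
    (hf : ConvexOn ℝ univ f) (hℓ : ConcaveOn ℝ univ ℓ) (hs : (interior s).Nonempty)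
    (hfℓ : EqOn f ℓ s) (y : F) : ℓ y ≤ f y := by
  obtain ⟨z, hz⟩ := hs
  have hnear : ∀ᶠ t in nhdsWithin (0 : ℝ) (Ioi 0), z + t • (y - z) ∈ s ∧ t ∈ Ioo 0 1 := by
    have hcont : Filter.Tendsto (fun t : ℝ => z + t • (y - z)) (nhds 0) (nhds z) := by
      simpa using ((continuous_id.smul continuous_const).const_add z).tendsto (0 : ℝ)
    exact ((hcont.eventually (mem_interior_iff_mem_nhds.1 hz)).filter_mono
      nhdsWithin_le_nhds).and (Ioo_mem_nhdsGT one_pos)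
  obtain ⟨t, hts, ht0, ht1⟩ := hnear.exists
  have hpt : z + t • (y - z) = (1 - t) • z + t • y := by module
  rw [hpt] at hts
  have hconv := hf.2 (mem_univ z) (mem_univ y) (sub_nonneg.2 ht1.le) ht0.le (by ring)
  have hconc := hℓ.2 (mem_univ z) (mem_univ y) (sub_nonneg.2 ht1.le) ht0.le (by ring)
  simp only [smul_eq_mul, hfℓ hts, hfℓ (interior_subset hz)] at hconv hconc
  exact le_of_mul_le_mul_left (by linarith) ht0

section NormedSpace

variable {E : Type*} [NormedAddCommGroup E] [NormedSpace ℝ E]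

lemma iteratedDeriv_comp_add_smul {F : Type*} [NormedAddCommGroup F] [NormedSpace ℝ F]
    {g : E → F} {n : ℕ} (hg : ContDiff ℝ n g) (x v : E) (t : ℝ) :
    iteratedDeriv n (fun s : ℝ => g (x + s • v)) t =
      iteratedFDeriv ℝ n g (x + t • v) fun _ => v := by
  have hline : (fun s : ℝ => g (x + s • v)) =
      (fun z => g (x + z)) ∘ ContinuousLinearMap.toSpanSingleton ℝ v := rfl
  have hshift : ContDiff ℝ n fun z => g (x + z) := hg.comp (contDiff_const.add contDiff_id)
  rw [iteratedDeriv_eq_iteratedFDeriv, hline,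
    ContinuousLinearMap.iteratedFDeriv_comp_right _ hshift t le_rfl,
    iteratedFDeriv_comp_add_left]
  simp

lemma ContinuousMultilinearMap.mul_norm_pow_le_apply_const {n : ℕ} [NeZero n]
    (A : ContinuousMultilinearMap ℝ (fun _ : Fin n => E) ℝ) {k : ℝ}
    (hA : ∀ u : E, ‖u‖ = 1 → k ≤ A fun _ => u) (v : E) :
    k * ‖v‖ ^ n ≤ A fun _ => v := by
  rcases eq_or_ne v 0 with rfl | hv
  · have : (A fun _ => 0) = 0 := A.map_zero
    simp [NeZero.ne n, this]
  have hv' : ‖v‖ ≠ 0 := norm_ne_zero_iff.2 hv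
  have hscale : (fun _ : Fin n => v) = fun i => (fun _ => ‖v‖) i • (fun _ => ‖v‖⁻¹ • v) i := by
    simp [smul_smul, mul_inv_cancel₀ hv']
  rw [hscale, A.map_smul_univ, Finset.prod_const, Finset.card_univ, Fintype.card_fin,
    smul_eq_mul, mul_comm k]
  gcongr
  exact hA _ (by simp [norm_smul, hv'])

lemma strongConvexOn_univ_of_le_iteratedDeriv_two {φ : ℝ → ℝ} {k : ℝ} (hφ : ContDiff ℝ 2 φ)
    (hk : ∀ t, k ≤ iteratedDeriv 2 φ t) : StrongConvexOn univ k φ := by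
  simp only [strongConvexOn_iff_convex, Real.norm_eq_abs, sq_abs]
  have hφ' : Differentiable ℝ φ := hφ.differentiable (by norm_num)
  have hφ'' : Differentiable ℝ (deriv φ) := by
    simpa using hφ.differentiable_iteratedDeriv 1 (by norm_num)
  have h1 : ∀ t, HasDerivAt (fun s => φ s - k / 2 * s ^ 2) (deriv φ t - k * t) t := fun t => by
    refine ((hφ' t).hasDerivAt.fun_sub ((hasDerivAt_pow 2 t).const_mul (k / 2))).congr_deriv ?_
    norm_num
    ring
  have h2 : ∀ t, HasDerivAt (deriv fun s => φ s - k / 2 * s ^ 2) (iteratedDeriv 2 φ t - k) t := by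
    intro t
    rw [funext fun t => (h1 t).deriv, iteratedDeriv_succ, iteratedDeriv_one]
    simpa using (hφ'' t).hasDerivAt.fun_sub ((hasDerivAt_id t).const_mul k)
  refine convexOn_univ_of_deriv2_nonneg (fun t => (h1 t).differentiableAt)
    (fun t => (h2 t).differentiableAt) fun t => ?_
  rw [Function.iterate_succ_apply, Function.iterate_one, (h2 t).deriv]
  linarith [hk t]

lemma strongConvexOn_univ_of_le_iteratedFDeriv_two {g : E → ℝ} {k : ℝ} (hg : ContDiff ℝ 2 g)
    (hk : ∀ u : E, ‖u‖ = 1 → ∀ x, k ≤ iteratedFDeriv ℝ 2 g x fun _ => u) :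
    StrongConvexOn univ k g := by
  refine ⟨convex_univ, fun x _ y _ a b ha hb hab => ?_⟩
  have hline : StrongConvexOn univ (k * ‖x - y‖ ^ 2) fun s : ℝ => g (y + s • (x - y)) := by
    refine strongConvexOn_univ_of_le_iteratedDeriv_two ?_ fun t => ?_
    · exact hg.comp (contDiff_const.add (contDiff_id.smul contDiff_const))
    · rw [iteratedDeriv_comp_add_smul hg]
      exact (iteratedFDeriv ℝ 2 g _).mul_norm_pow_le_apply_const (hk · · _) _
  have hline_xy := hline.2 (mem_univ 1) (mem_univ 0) ha hb hab
  have hpt : y + a • (x - y) = a • x + b • y := by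
    obtain rfl : b = 1 - a := by linarith
    module
  simp only [smul_eq_mul, mul_one, mul_zero, add_zero, one_smul, zero_smul, sub_zero, norm_one,
    one_pow, hpt, add_sub_cancel] at hline_xy ⊢
  linarith

lemma StrongConvexOn.mul_norm_sub_sq_le_of_abs_sub_lt {f g : E → ℝ} {k ε : ℝ}
    (hg : StrongConvexOn univ k g) (hfg : ∀ x, |f x - g x| < ε) {x y : E}
    (hmid : (1 / 2 : ℝ) * f x + (1 / 2 : ℝ) * f y ≤ f ((1 / 2 : ℝ) • x + (1 / 2 : ℝ) • y)) :
    k * ‖x - y‖ ^ 2 ≤ 16 * ε := by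
  have hstrong := hg.2 (mem_univ x) (mem_univ y) (by norm_num : (0 : ℝ) ≤ 1 / 2)
    (by norm_num : (0 : ℝ) ≤ 1 / 2) (by norm_num)
  simp only [smul_eq_mul] at hstrong
  obtain ⟨hx, -⟩ := abs_lt.1 (hfg x)
  obtain ⟨hy, -⟩ := abs_lt.1 (hfg y)
  obtain ⟨-, hm⟩ := abs_lt.1 (hfg ((1 / 2 : ℝ) • x + (1 / 2 : ℝ) • y))
  linarith

end NormedSpace

lemma le_div_mul_sqrt_of_mul_sq_le {r h H ε : ℝ} (hr : 0 ≤ r) (h0 : 0 < h) (hH : h ≤ H)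
    (hrε : h * r ^ 2 ≤ 16 * ε) : r ≤ 4 / h * √(ε * H) := by
  have hε : 0 ≤ ε := by nlinarith [sq_nonneg r]
  have hεH : 0 ≤ ε * H := mul_nonneg hε (h0.le.trans hH)
  rw [← Real.sqrt_sq (by positivity : 0 ≤ 4 / h), ← Real.sqrt_mul (sq_nonneg _),
    Real.le_sqrt hr (by positivity), div_pow, div_mul_eq_mul_div, le_div_iff₀ (by positivity)]
  nlinarith [mul_le_mul_of_nonneg_left hH hε]

theorem stmt2_general (g f : EuclideanSpace ℝ (Fin d) → ℝ) (h H ε : ℝ)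
    (hg : ContDiff ℝ 2 g) (h0 : 0 < h) (hH : h ≤ H)
    (hdd : ∀ u : EuclideanSpace ℝ (Fin d), ‖u‖ = 1 → ∀ x,
      h ≤ iteratedFDeriv ℝ 2 g x ![u, u] ∧ iteratedFDeriv ℝ 2 g x ![u, u] ≤ H)
    (hfconv : ConvexOn ℝ Set.univ f)
    (hfg : ∀ x, |f x - g x| < ε)
    (Δ : Set (EuclideanSpace ℝ (Fin d))) (hΔint : (interior Δ).Nonempty)
    (m : EuclideanSpace ℝ (Fin d)) (c : ℝ) (hfa : ∀ x ∈ Δ, f x = ⟪m, x⟫ + c) :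
    (∀ x ∈ Δ, ∀ x' ∈ Δ, ‖x - x'‖ ≤ 4 / h * Real.sqrt (ε * H)) ∧
    Bornology.IsBounded Δ := by
  have hg_strong : StrongConvexOn univ h g :=
    strongConvexOn_univ_of_le_iteratedFDeriv_two hg fun u hu x => by
      simpa [Matrix.vec_single_eq_const, Matrix.vecCons_const] using (hdd u hu x).1
  have hℓ : ConcaveOn ℝ univ fun x => ⟪m, x⟫ + c :=
    ((innerSL ℝ m).toLinearMap.concaveOn convex_univ).add_const c
  have hℓf : ∀ y, ⟪m, y⟫ + c ≤ f y := hfconv.le_of_concaveOn_of_eqOn hℓ hΔint hfa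
  have hdiam : ∀ x ∈ Δ, ∀ x' ∈ Δ, ‖x - x'‖ ≤ 4 / h * √(ε * H) := by
    intro x hx x' hx'
    have hmid :
        (1 / 2 : ℝ) * f x + (1 / 2 : ℝ) * f x' ≤ f ((1 / 2 : ℝ) • x + (1 / 2 : ℝ) • x') := by
      have hℓmid := hℓ.2 (mem_univ x) (mem_univ x') (by norm_num : (0 : ℝ) ≤ 1 / 2)
        (by norm_num : (0 : ℝ) ≤ 1 / 2) (by norm_num)
      rw [hfa x hx, hfa x' hx']
      exact hℓmid.trans (hℓf _)
    exact le_div_mul_sqrt_of_mul_sq_le (norm_nonneg _) h0 hH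
      (hg_strong.mul_norm_sub_sq_le_of_abs_sub_lt hfg hmid)
  exact ⟨hdiam, Metric.isBounded_iff.2
    ⟨_, fun x hx x' hx' => (dist_eq_norm x x').trans_le (hdiam x hx x' hx')⟩⟩

/-- Lemma 3.7 (diameter estimate): under the same hypotheses as the gradient estimate,
any full-dimensional region on which `f` is affine has diameter at most `(4/h)·√(εH)`;
in particular it is bounded. -/
theorem stmt2 (g f : EuclideanSpace ℝ (Fin d) → ℝ) (h H ε : ℝ)
    (hg : ContDiff ℝ 2 g) (h0 : 0 < h) (hH : h ≤ H)
    (hdd : ∀ u : EuclideanSpace ℝ (Fin d), ‖u‖ = 1 → ∀ x,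
      h ≤ iteratedFDeriv ℝ 2 g x ![u, u] ∧ iteratedFDeriv ℝ 2 g x ![u, u] ≤ H)
    (hfconv : ConvexOn ℝ Set.univ f) (hfpoly : IsPolytopalFn f)
    (hfg : ∀ x, |f x - g x| < ε)
    (Δ : Set (EuclideanSpace ℝ (Fin d))) (hΔint : (interior Δ).Nonempty)
    (m : EuclideanSpace ℝ (Fin d)) (c : ℝ) (hfa : ∀ x ∈ Δ, f x = ⟪m, x⟫ + c) :
    (∀ x ∈ Δ, ∀ x' ∈ Δ, ‖x - x'‖ ≤ 4 / h * Real.sqrt (ε * H)) ∧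
    Bornology.IsBounded Δ :=
  stmt2_general g f h H ε hg h0 hH hdd hfconv hfg Δ hΔint m c hfa
end
end

section
/- Let g : ℝ^d → ℝ be C² with ∇_u∇_u g(x) > h > 0 for all unit vectors u and all x. Let ℓ(x) = (∇g(p) − ε)·(x − p) + g(p) − δ be a perturbed supporting affine function at a point p, with ‖ε‖ < 1/N and 0 < δ < 1/N². Then for all x, g(x) − ℓ(x) > h‖x − p‖²/2 − ‖x − p‖/N. Consequently, for any M ∈ ℝ and any compact set V, only finitely many such affine functions (at points p of a (1/N)-lattice) exceed M somewhere on V, and the pointwise supremum of this family of affine functions is a convex piecewise-affine continuous function. -/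
/-!
Along the line `t ↦ p + t (x - p)`, the function `g` minus `h t² ‖x - p‖² / 2` is convex, so `g`
lies above its tangent plane at `p` plus `h ‖x - p‖² / 2`; the perturbations `ε`, `δ` cost at most
`‖x - p‖ / N` and make the bound strict. Hence every `ℓ_j` lies below `g + 1 / (2 h N²)`, and
`ℓ_j` can reach a level `M` somewhere on a compact `V` only if `p_j` stays in a bounded set, which
contains finitely many lattice points. The supremum of the affine `ℓ_j` is then convex, hence
continuous in finite dimension, and on `V` it is attained among the finitely many `ℓ_j` that exceed
the minimum over `V` of one fixed `ℓ_{j₀}`.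
-/

open Set
open scoped RealInnerProductSpace

noncomputable section

variable {d : ℕ}

def IsAffineFn (z : EuclideanSpace ℝ (Fin d) → ℝ) : Prop :=
  ∃ (m : EuclideanSpace ℝ (Fin d)) (c : ℝ), ∀ x, z x = ⟪m, x⟫ + c

def latticeOf (b : Module.Basis (Fin d) ℝ (EuclideanSpace ℝ (Fin d))) :
    Set (EuclideanSpace ℝ (Fin d)) :=
  {v | ∃ n : Fin d → ℤ, v = ∑ i, (n i : ℝ) • b i}

section

variable {E : Type*} [NormedAddCommGroup E] [NormedSpace ℝ E]

lemma ContinuousMultilinearMap.mul_sq_norm_le_apply_of_forall_norm_eq_one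
    (B : ContinuousMultilinearMap ℝ (fun _ : Fin 2 => E) ℝ) {m : ℝ}
    (hB : ∀ u : E, ‖u‖ = 1 → m < B ![u, u]) (v : E) : m * ‖v‖ ^ 2 ≤ B ![v, v] := by
  rcases eq_or_ne v 0 with rfl | hv
  · simp [B.map_coord_zero (m := ![0, 0]) (0 : Fin 2) rfl]
  set u := ‖v‖⁻¹ • v
  have hscale : B ![v, v] = ‖v‖ ^ 2 * B ![u, u] := by
    have hvu : ![v, v] = fun i => ‖v‖ • ![u, u] i := by
      funext i
      fin_cases i <;> simp [u, smul_smul, norm_ne_zero_iff.mpr hv]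
    rw [hvu, B.map_smul_univ]
    simp [sq]
  rw [hscale]
  nlinarith [hB u (norm_smul_inv_norm hv), sq_nonneg ‖v‖]

lemma hasDerivAt_const_add_smul (p v : E) (t : ℝ) : HasDerivAt (fun t : ℝ => p + t • v) v t := by
  simpa using ((hasDerivAt_id t).smul_const v).const_add p

lemma hasDerivAt_comp_add_smul {g : E → ℝ} (hg : Differentiable ℝ g) (p v : E) (t : ℝ) :
    HasDerivAt (fun t : ℝ => g (p + t • v)) (fderiv ℝ g (p + t • v) v) t :=
  (hg _).hasFDerivAt.comp_hasDerivAt t (hasDerivAt_const_add_smul p v t)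

lemma hasDerivAt_fderiv_apply_comp_add_smul {g : E → ℝ} (hg : ContDiff ℝ 2 g) (p v : E) (t : ℝ) :
    HasDerivAt (fun t : ℝ => fderiv ℝ g (p + t • v) v)
      (iteratedFDeriv ℝ 2 g (p + t • v) ![v, v]) t := by
  have hDg : Differentiable ℝ (fderiv ℝ g) :=
    (hg.fderiv_right (m := 1) (by norm_num)).differentiable (by norm_num)
  rw [iteratedFDeriv_two_apply]
  simpa using ((hDg _).hasFDerivAt.comp_hasDerivAt t (hasDerivAt_const_add_smul p v t)).clm_apply
    (hasDerivAt_const t v)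

theorem ContDiff.add_fderiv_add_le_of_le_iteratedFDeriv_two {g : E → ℝ} (hg : ContDiff ℝ 2 g)
    {m : ℝ} (hm : ∀ y v, m * ‖v‖ ^ 2 ≤ iteratedFDeriv ℝ 2 g y ![v, v]) (p x : E) :
    g p + fderiv ℝ g p (x - p) + m / 2 * ‖x - p‖ ^ 2 ≤ g x := by
  set v := x - p
  set c := m * ‖v‖ ^ 2
  set ψ : ℝ → ℝ := fun t => g (p + t • v) - c / 2 * t ^ 2
  set ψ' : ℝ → ℝ := fun t => fderiv ℝ g (p + t • v) v - c * t
  have hψ : ∀ t, HasDerivAt ψ (ψ' t) t := fun t =>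
    ((hasDerivAt_comp_add_smul (hg.differentiable (by norm_num)) p v t).sub
      ((hasDerivAt_pow 2 t).const_mul (c / 2))).congr_deriv (by simp [ψ']; ring)
  have hψ' : ∀ t, HasDerivAt ψ' (iteratedFDeriv ℝ 2 g (p + t • v) ![v, v] - c) t := fun t =>
    ((hasDerivAt_fderiv_apply_comp_add_smul hg p v t).sub
      ((hasDerivAt_id t).const_mul c)).congr_deriv (by ring)
  -- `ψ'' = D²g[v, v] - m‖v‖² ≥ 0`, so `ψ` lies above its tangent at `0`.
  have hconvex : ConvexOn ℝ univ ψ := by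
    refine Monotone.convexOn_univ_of_deriv (fun t => (hψ t).differentiableAt) ?_
    rw [show deriv ψ = ψ' from funext fun t => (hψ t).deriv]
    exact monotone_of_hasDerivAt_nonneg hψ' fun t => sub_nonneg.mpr (hm _ v)
  have hslope := hconvex.le_slope_of_hasDerivAt (mem_univ 0) (mem_univ 1) one_pos (hψ 0)
  simp only [ψ, ψ', slope_def_field, zero_smul, add_zero, one_smul, mul_zero, sub_zero, div_one,
    one_pow, mul_one, zero_pow two_ne_zero, v, add_sub_cancel, c] at hslope
  linarith

end

lemma exists_le_of_mul_sq_sub_mul_lt {m : ℝ} (hm : 0 < m) (η K : ℝ) :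
    ∃ R, ∀ r : ℝ, m * r ^ 2 / 2 - η * r < K → r ≤ R := by
  refine ⟨max 1 (2 * (|η| + |K|) / m), fun r hr => ?_⟩
  by_contra! hR
  have h1 : 1 < r := (le_max_left _ _).trans_lt hR
  have h2 : 2 * (|η| + |K|) < m * r := by
    have := (le_max_right _ _).trans_lt hR
    rw [div_lt_iff₀ hm] at this
    linarith
  nlinarith [le_abs_self η, le_abs_self K, abs_nonneg K]

lemma Module.Basis.finite_setOf_norm_sum_intCast_smul_le {ι E : Type*} [Fintype ι]
    [NormedAddCommGroup E] [NormedSpace ℝ E] (b : Module.Basis ι ℝ E) (R : ℝ) :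
    {n : ι → ℤ | ‖∑ i, (n i : ℝ) • b i‖ ≤ R}.Finite := by
  have := Module.Finite.of_basis b
  set f : (ι → ℤ) → E := fun n => ∑ i, (n i : ℝ) • b i
  have hinj : Function.Injective f := by
    have : f = b.equivFun.symm ∘ fun n i => (n i : ℝ) := by
      funext n; simp [f, b.equivFun_symm_apply]
    rw [this]
    exact b.equivFun.symm.injective.comp fun n n' h =>
      funext fun i => Int.cast_injective (congrFun h i)
  have hspan : ∀ n, f n ∈ Submodule.span ℤ (range b) := fun n =>
    Submodule.sum_mem _ fun i _ => by
      rw [Int.cast_smul_eq_zsmul]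
      exact zsmul_mem (Submodule.subset_span (mem_range_self i)) _
  refine ((ZSpan.setFinite_inter b (Metric.isBounded_closedBall (x := 0) (r := R))).preimage
    hinj.injOn).subset fun n hn => ⟨mem_closedBall_zero_iff.mpr hn, hspan n⟩

lemma Module.Basis.finite_setOf_norm_sum_div_smul_le {ι E : Type*} [Fintype ι]
    [NormedAddCommGroup E] [NormedSpace ℝ E] (b : Module.Basis ι ℝ E) {N : ℕ} (hN : 0 < N)
    (R : ℝ) : {n : ι → ℤ | ‖∑ i, ((n i : ℝ) / N) • b i‖ ≤ R}.Finite := by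
  have hunit : ∀ _ : ι, IsUnit ((N : ℝ)⁻¹) := fun _ => by simp; omega
  convert (b.isUnitSMul hunit).finite_setOf_norm_sum_intCast_smul_le R using 5
  simp [b.isUnitSMul_apply, smul_smul, div_eq_mul_inv]

lemma ConvexOn.ciSup {E ι : Type*} [AddCommGroup E] [Module ℝ E] [Nonempty ι] {s : Set E}
    {f : ι → E → ℝ} (hf : ∀ i, ConvexOn ℝ s (f i))
    (hbdd : ∀ x ∈ s, BddAbove (range fun i => f i x)) :
    ConvexOn ℝ s fun x => ⨆ i, f i x := by
  refine ⟨(hf (Classical.arbitrary ι)).1, fun x hx y hy a b ha hb hab => ciSup_le fun i => ?_⟩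
  refine ((hf i).2 hx hy ha hb hab).trans ?_
  gcongr
  · exact le_ciSup (hbdd x hx) i
  · exact le_ciSup (hbdd y hy) i

lemma IsCompact.exists_finset_ciSup_eq_sup' {X ι : Type*} [TopologicalSpace X] [Nonempty ι]
    {f : ι → X → ℝ} {V : Set X} (hV : IsCompact V) (hcont : ∀ i, ContinuousOn (f i) V)
    (hbdd : ∀ x, BddAbove (range fun i => f i x))
    (hfin : ∀ M, {i | ∃ x ∈ V, M ≤ f i x}.Finite) :
    ∃ (J : Finset ι) (hJ : J.Nonempty), ∀ x ∈ V, ⨆ i, f i x = J.sup' hJ fun i => f i x := by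
  classical
  obtain ⟨i₀⟩ := ‹Nonempty ι›
  obtain ⟨M, hM⟩ := hV.bddBelow_image (hcont i₀)
  refine ⟨insert i₀ (hfin M).toFinset, Finset.insert_nonempty _ _, fun x hx => ?_⟩
  refine le_antisymm (ciSup_le fun i => ?_) (Finset.sup'_le _ _ fun i _ => le_ciSup (hbdd x) i)
  by_cases hi : M ≤ f i x
  · exact Finset.le_sup' (fun i => f i x) (by simpa using Or.inr ⟨x, hx, hi⟩)
  · calc f i x ≤ f i₀ x := (not_le.mp hi).le.trans (hM ⟨x, hx, rfl⟩)
      _ ≤ _ := Finset.le_sup' (fun i => f i x) (Finset.mem_insert_self _ _)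

section

variable {E : Type*} [NormedAddCommGroup E] [InnerProductSpace ℝ E] [CompleteSpace E]

def perturbedTangent (g : E → ℝ) (p e : E) (δ : ℝ) (x : E) : ℝ :=
  ⟪gradient g p - e, x - p⟫ + g p - δ

lemma continuous_perturbedTangent (g : E → ℝ) (p e : E) (δ : ℝ) :
    Continuous (perturbedTangent g p e δ) := by
  unfold perturbedTangent
  fun_prop

lemma convexOn_perturbedTangent (g : E → ℝ) (p e : E) (δ : ℝ) :
    ConvexOn ℝ univ (perturbedTangent g p e δ) := by
  refine ⟨convex_univ, fun x _ y _ a b _ _ hab => le_of_eq ?_⟩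
  obtain rfl := eq_sub_of_add_eq' hab
  have hsplit : a • x + (1 - a) • y - p = a • (x - p) + (1 - a) • (y - p) := by module
  simp only [perturbedTangent, hsplit, inner_add_right, real_inner_smul_right, smul_eq_mul]
  ring

variable {g : E → ℝ} {m η : ℝ}

lemma mul_sq_norm_sub_lt_sub_perturbedTangent (hg : ContDiff ℝ 2 g)
    (hm : ∀ y v, m * ‖v‖ ^ 2 ≤ iteratedFDeriv ℝ 2 g y ![v, v]) {p e : E} {δ : ℝ} (he : ‖e‖ ≤ η)
    (hδ : 0 < δ) (x : E) :
    m * ‖x - p‖ ^ 2 / 2 - η * ‖x - p‖ < g x - perturbedTangent g p e δ x := by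
  have htaylor := hg.add_fderiv_add_le_of_le_iteratedFDeriv_two hm p x
  have he' : -(η * ‖x - p‖) ≤ ⟪e, x - p⟫ :=
    (abs_le.mp ((abs_real_inner_le_norm _ _).trans (by gcongr))).1
  rw [← inner_gradient_left] at htaylor
  rw [perturbedTangent, inner_sub_left]
  linarith

lemma perturbedTangent_le (hg : ContDiff ℝ 2 g)
    (hm : ∀ y v, m * ‖v‖ ^ 2 ≤ iteratedFDeriv ℝ 2 g y ![v, v]) (hm0 : 0 < m) {p e : E} {δ : ℝ}
    (he : ‖e‖ ≤ η) (hδ : 0 < δ) (x : E) :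
    perturbedTangent g p e δ x ≤ g x + η ^ 2 / (2 * m) := by
  have hlower := mul_sq_norm_sub_lt_sub_perturbedTangent hg hm (p := p) he hδ x
  have hamgm : η * ‖x - p‖ - m * ‖x - p‖ ^ 2 / 2 ≤ η ^ 2 / (2 * m) := by
    rw [le_div_iff₀ (by positivity)]
    nlinarith [sq_nonneg (m * ‖x - p‖ - η)]
  linarith

lemma exists_norm_le_of_le_perturbedTangent (hg : ContDiff ℝ 2 g)
    (hm : ∀ y v, m * ‖v‖ ^ 2 ≤ iteratedFDeriv ℝ 2 g y ![v, v]) (hm0 : 0 < m) {V : Set E}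
    (hV : IsCompact V) (M : ℝ) :
    ∃ R, ∀ p e δ, ‖e‖ ≤ η → 0 < δ → ∀ x ∈ V, M ≤ perturbedTangent g p e δ x → ‖p‖ ≤ R := by
  obtain ⟨C, hC⟩ := hV.bddAbove_image hg.continuous.continuousOn
  obtain ⟨B, hB⟩ := isBounded_iff_forall_norm_le.mp hV.isBounded
  obtain ⟨R, hR⟩ := exists_le_of_mul_sq_sub_mul_lt hm0 η (C - M)
  refine ⟨B + R, fun p e δ he hδ x hx hMx => ?_⟩
  have hdist : ‖x - p‖ ≤ R := hR _ <| by
    linarith [mul_sq_norm_sub_lt_sub_perturbedTangent hg hm (p := p) he hδ x, hC ⟨x, hx, rfl⟩]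
  calc ‖p‖ ≤ ‖x‖ + ‖x - p‖ := by simpa using norm_sub_le x (x - p)
    _ ≤ B + R := add_le_add (hB x hx) hdist

lemma finite_setOf_exists_le_perturbedTangent (hg : ContDiff ℝ 2 g)
    (hm : ∀ y v, m * ‖v‖ ^ 2 ≤ iteratedFDeriv ℝ 2 g y ![v, v]) (hm0 : 0 < m) {ι : Type*}
    {P ε : ι → E} {δ : ι → ℝ} (hP : ∀ R, {j | ‖P j‖ ≤ R}.Finite) (hε : ∀ j, ‖ε j‖ ≤ η)
    (hδ : ∀ j, 0 < δ j) {V : Set E} (hV : IsCompact V) (M : ℝ) :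
    {j | ∃ x ∈ V, M ≤ perturbedTangent g (P j) (ε j) (δ j) x}.Finite := by
  obtain ⟨R, hR⟩ := exists_norm_le_of_le_perturbedTangent hg hm hm0 (η := η) hV M
  exact (hP R).subset fun j ⟨x, hx, hMx⟩ => hR _ _ _ (hε j) (hδ j) x hx hMx

end

/-- The lower-bound inequality for perturbed supporting affine functions of a uniformly
strictly convex function, together with its consequences: local finiteness of the
family on compact sets, and convexity/continuity/piecewise-affineness of the pointwise
supremum. -/
theorem stmt8 (b : Module.Basis (Fin d) ℝ (EuclideanSpace ℝ (Fin d)))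
    (g : EuclideanSpace ℝ (Fin d) → ℝ) (hg : ContDiff ℝ 2 g)
    (h : ℝ) (h0 : 0 < h)
    (hHess : ∀ u : EuclideanSpace ℝ (Fin d), ‖u‖ = 1 → ∀ x,
      h < iteratedFDeriv ℝ 2 g x ![u, u])
    (N : ℕ) (hN : 0 < N)
    (ε : (Fin d → ℤ) → EuclideanSpace ℝ (Fin d)) (δ : (Fin d → ℤ) → ℝ)
    (hε : ∀ j, ‖ε j‖ < 1 / N) (hδ : ∀ j, 0 < δ j ∧ δ j < 1 / (N ^ 2))
    (P : (Fin d → ℤ) → EuclideanSpace ℝ (Fin d))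
    (hP : ∀ j, P j = ∑ i, ((j i : ℝ) / N) • b i)
    (ℓ : (Fin d → ℤ) → EuclideanSpace ℝ (Fin d) → ℝ)
    (hℓ : ∀ j x, ℓ j x = ⟪gradient g (P j) - ε j, x - P j⟫ + g (P j) - δ j) :
    (∀ j x, h * ‖x - P j‖ ^ 2 / 2 - ‖x - P j‖ / N < g x - ℓ j x) ∧
    (∀ (M : ℝ) (V : Set (EuclideanSpace ℝ (Fin d))), IsCompact V →
      {j : Fin d → ℤ | ∃ x ∈ V, M ≤ ℓ j x}.Finite) ∧
    ConvexOn ℝ Set.univ (fun x => ⨆ j, ℓ j x) ∧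
    Continuous (fun x => ⨆ j, ℓ j x) ∧
    (∀ V : Set (EuclideanSpace ℝ (Fin d)), IsCompact V →
      ∃ (J : Finset (Fin d → ℤ)) (hJ : J.Nonempty),
        ∀ x ∈ V, (⨆ j, ℓ j x) = J.sup' hJ fun j => ℓ j x) := by
  have hm : ∀ y v, h * ‖v‖ ^ 2 ≤ iteratedFDeriv ℝ 2 g y ![v, v] := fun y =>
    (iteratedFDeriv ℝ 2 g y).mul_sq_norm_le_apply_of_forall_norm_eq_one fun u hu => hHess u hu y
  have hε' : ∀ j, ‖ε j‖ ≤ 1 / N := fun j => (hε j).le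
  have hδ' : ∀ j, 0 < δ j := fun j => (hδ j).1
  obtain rfl : ℓ = fun j => perturbedTangent g (P j) (ε j) (δ j) := funext₂ hℓ
  have hfin : ∀ (M : ℝ) (V : Set (EuclideanSpace ℝ (Fin d))), IsCompact V →
      {j : Fin d → ℤ | ∃ x ∈ V, M ≤ perturbedTangent g (P j) (ε j) (δ j) x}.Finite :=
    fun M V hV => finite_setOf_exists_le_perturbedTangent hg hm h0
      (fun R => by simpa only [hP] using b.finite_setOf_norm_sum_div_smul_le hN R) hε' hδ' hV M
  have hbdd : ∀ x, BddAbove (range fun j => perturbedTangent g (P j) (ε j) (δ j) x) := fun x =>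
    ⟨_, forall_mem_range.mpr fun j => perturbedTangent_le hg hm h0 (hε' j) (hδ' j) x⟩
  have hconvex := ConvexOn.ciSup (fun j => convexOn_perturbedTangent g (P j) (ε j) (δ j))
    fun x _ => hbdd x
  refine ⟨fun j x => ?_, hfin, hconvex, continuousOn_univ.mp (hconvex.continuousOn isOpen_univ),
    fun V hV => hV.exists_finset_ciSup_eq_sup'
      (fun j => (continuous_perturbedTangent _ _ _ _).continuousOn) hbdd fun M => hfin M V hV⟩
  simpa only [one_div_mul_eq_div] using
    mul_sq_norm_sub_lt_sub_perturbedTangent hg hm (hε' j) (hδ' j) x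
end
end

section
/- Let g : ℝ^d → ℝ be C² with second directional derivatives bounded above by H (i.e., ∇_u∇_u g(x) < H for all unit u and x). With notation as in the approximation construction: for each x there is a lattice point λ_j with ‖λ_j − x‖ ≤ R/N (R the diameter of a fundamental domain), and g^{(N)}(x) = sup_j g^{(N)}_{λ_j}(x) is the supremum of perturbed supporting affine functions with perturbation sizes < 1/N and < 1/N². Then 0 ≤ g(x) − g^{(N)}(x) < (R²·H + 2R + 2)/(2N²) for all x ∈ ℝ^d. In particular g^{(N)} → g uniformly as N → ∞. -/
/-!
Along the segment from a lattice point `p` to `x`, the bound `H` on second directional derivatives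
makes `t ↦ g(p + t(x - p)) - H t² ‖x - p‖² / 2` concave, so `g` exceeds its tangent plane at `p` by at
most `H ‖x - p‖² / 2 ≤ H R² / (2N²)`. The perturbations of slope and height cost at most
`‖ε‖ ‖x - p‖ ≤ R / N²` and `δ < 1 / N²` more, and `g⁽ᴺ⁾ ≤ g` since every `ℓ_j ≤ g`.
-/

open Set
open scoped RealInnerProductSpace

noncomputable section

variable {d : ℕ}

lemma le_add_deriv_mul_add_of_deriv2_le {f f' f'' : ℝ → ℝ} {C x y : ℝ}
    (hf : ∀ t, HasDerivAt f (f' t) t) (hf' : ∀ t, HasDerivAt f' (f'' t) t)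
    (hC : ∀ t, f'' t ≤ C) (hxy : x ≤ y) :
    f y ≤ f x + f' x * (y - x) + C * (y - x) ^ 2 / 2 := by
  rcases hxy.eq_or_lt with rfl | hxy
  · simp
  set φ : ℝ → ℝ := fun t => f t - C * (t - x) ^ 2 / 2
  have hφ : ∀ t, HasDerivAt φ (f' t - C * (t - x)) t := fun t => by
    refine ((hf t).sub ((((hasDerivAt_id t).sub_const x).pow 2).const_mul C |>.div_const 2)
      ).congr_deriv ?_
    simp only [id_eq, Nat.cast_ofNat]
    ring
  have hφ' : ∀ t, HasDerivAt (fun t => f' t - C * (t - x)) (f'' t - C) t := fun t => by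
    refine ((hf' t).sub (((hasDerivAt_id t).sub_const x).const_mul C)).congr_deriv ?_
    ring
  have hderiv : deriv φ = fun t => f' t - C * (t - x) := funext fun t => (hφ t).deriv
  have hconc : ConcaveOn ℝ univ φ := by
    refine concaveOn_univ_of_deriv2_nonpos (fun t => (hφ t).differentiableAt) ?_ fun t => ?_
    · rw [hderiv]; exact fun t => (hφ' t).differentiableAt
    · simp only [Function.iterate_succ, Function.iterate_zero, Function.comp_apply, hderiv,
        Function.id_def, (hφ' t).deriv]
      linarith [hC t]
  have hslope := hconc.slope_le_of_hasDerivAt (mem_univ x) (mem_univ y) hxy (hφ x)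
  rw [slope_def_field] at hslope
  simp only [φ, sub_self, mul_zero, zero_pow two_ne_zero, zero_div, sub_zero] at hslope
  rw [div_le_iff₀ (sub_pos.2 hxy)] at hslope
  nlinarith

section NormedSpace

variable {E : Type*} [NormedAddCommGroup E] [NormedSpace ℝ E] {g : E → ℝ}

lemma fderiv_fderiv_apply_self_le_mul_norm_sq {H : ℝ}
    (hH : ∀ u : E, ‖u‖ = 1 → ∀ x, iteratedFDeriv ℝ 2 g x ![u, u] < H) (x v : E) :
    fderiv ℝ (fderiv ℝ g) x v v ≤ H * ‖v‖ ^ 2 := by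
  rcases eq_or_ne v 0 with rfl | hv
  · simp
  have hv' : ‖v‖ ≠ 0 := norm_ne_zero_iff.2 hv
  set u := ‖v‖⁻¹ • v
  have hu : ‖u‖ = 1 := by rw [norm_smul, norm_inv, norm_norm, inv_mul_cancel₀ hv']
  have hvu : v = ‖v‖ • u := by rw [smul_smul, mul_inv_cancel₀ hv', one_smul]
  have hHu := hH u hu x
  rw [iteratedFDeriv_two_apply] at hHu
  rw [hvu]
  simp only [map_smul, FunLike.coe_smul, Pi.smul_apply, norm_smul, norm_norm,
    smul_eq_mul, hu, Matrix.cons_val_zero, Matrix.cons_val_one] at hHu ⊢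
  nlinarith [sq_nonneg ‖v‖, norm_nonneg v]

lemma le_add_fderiv_add_of_fderiv_fderiv_le (hg : ContDiff ℝ 2 g) {C : ℝ} (p v : E)
    (hC : ∀ x, fderiv ℝ (fderiv ℝ g) x v v ≤ C) :
    g (p + v) ≤ g p + fderiv ℝ g p v + C / 2 := by
  have hdg : Differentiable ℝ g := hg.differentiable (by norm_num)
  have hdg' : Differentiable ℝ (fderiv ℝ g) :=
    (hg.fderiv_right (m := 1) (by norm_num)).differentiable (by norm_num)
  have hline : ∀ t : ℝ, HasDerivAt (fun s : ℝ => p + s • v) v t := fun t => by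
    simpa using ((hasDerivAt_id t).smul_const v).const_add p
  have hf : ∀ t : ℝ, HasDerivAt (fun s => g (p + s • v)) (fderiv ℝ g (p + t • v) v) t :=
    fun t => (hdg _).hasFDerivAt.comp_hasDerivAt t (hline t)
  have hf' : ∀ t : ℝ, HasDerivAt (fun s => fderiv ℝ g (p + s • v) v)
      (fderiv ℝ (fderiv ℝ g) (p + t • v) v v) t := fun t => by
    simpa using ((hdg' _).hasFDerivAt.comp_hasDerivAt t (hline t)).clm_apply (hasDerivAt_const t v)
  simpa using le_add_deriv_mul_add_of_deriv2_le hf hf' (fun t => hC _) zero_le_one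

end NormedSpace

lemma le_add_inner_gradient_add_of_fderiv_fderiv_le {F : Type*} [NormedAddCommGroup F]
    [InnerProductSpace ℝ F] [CompleteSpace F] {g : F → ℝ} (hg : ContDiff ℝ 2 g) {H : ℝ}
    (hH : ∀ x v, fderiv ℝ (fderiv ℝ g) x v v ≤ H * ‖v‖ ^ 2) (p x : F) :
    g x ≤ g p + ⟪gradient g p, x - p⟫ + H * ‖x - p‖ ^ 2 / 2 := by
  simpa [inner_gradient_left] using
    le_add_fderiv_add_of_fderiv_fderiv_le hg p (x - p) fun y => hH y (x - p)

theorem stmt9_general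
    (g : EuclideanSpace ℝ (Fin d) → ℝ) (hg : ContDiff ℝ 2 g)
    (H : ℝ) (hH0 : 0 < H)
    (hHess : ∀ u : EuclideanSpace ℝ (Fin d), ‖u‖ = 1 → ∀ x,
      iteratedFDeriv ℝ 2 g x ![u, u] < H)
    (N : ℕ) (hN : 0 < N) (R : ℝ)
    (ε : (Fin d → ℤ) → EuclideanSpace ℝ (Fin d)) (δ : (Fin d → ℤ) → ℝ)
    (hε : ∀ j, ‖ε j‖ < 1 / N) (hδ : ∀ j, 0 < δ j ∧ δ j < 1 / (N ^ 2))
    (P : (Fin d → ℤ) → EuclideanSpace ℝ (Fin d))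
    (hdense : ∀ x, ∃ j, ‖P j - x‖ ≤ R / N)
    (ℓ : (Fin d → ℤ) → EuclideanSpace ℝ (Fin d) → ℝ)
    (hℓ : ∀ j x, ℓ j x = ⟪gradient g (P j) - ε j, x - P j⟫ + g (P j) - δ j)
    (hle : ∀ j x, ℓ j x ≤ g x) :
    ∀ x, 0 ≤ g x - (⨆ j, ℓ j x) ∧
      g x - (⨆ j, ℓ j x) < (R ^ 2 * H + 2 * R + 2) / (2 * N ^ 2) := by
  intro x
  have hbdd : BddAbove (range fun j => ℓ j x) := ⟨g x, forall_mem_range.2 fun j => hle j x⟩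
  refine ⟨sub_nonneg.2 (ciSup_le fun j => hle j x), ?_⟩
  obtain ⟨j, hj⟩ := hdense x
  have hx : ‖x - P j‖ ≤ R / N := by rwa [norm_sub_rev]
  have htaylor := le_add_inner_gradient_add_of_fderiv_fderiv_le hg
    (fderiv_fderiv_apply_self_le_mul_norm_sq hHess) (P j) x
  have hN' : (0 : ℝ) < N := Nat.cast_pos.2 hN
  calc g x - ⨆ j, ℓ j x ≤ g x - ℓ j x := by gcongr; exact le_ciSup hbdd j
    _ ≤ H * ‖x - P j‖ ^ 2 / 2 + ‖ε j‖ * ‖x - P j‖ + δ j := by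
      rw [hℓ, inner_sub_left]
      linarith [real_inner_le_norm (ε j) (x - P j)]
    _ < H * (R / N) ^ 2 / 2 + 1 / N * (R / N) + 1 / N ^ 2 := by
      have hquad : H * ‖x - P j‖ ^ 2 / 2 ≤ H * (R / N) ^ 2 / 2 := by gcongr
      have hlin : ‖ε j‖ * ‖x - P j‖ ≤ 1 / N * (R / N) := by gcongr; exact (hε j).le
      linarith [(hδ j).2]
    _ = (R ^ 2 * H + 2 * R + 2) / (2 * N ^ 2) := by
      field_simp

/-- Lemma 3.5 (approximation bound): if the perturbed supporting affine minorants
`ℓ_j ≤ g` are taken at `(1/N)`-lattice points which are `R/N`-dense, then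
`0 ≤ g − g^{(N)} < (R²H + 2R + 2)/(2N²)` for `g^{(N)} = sup_j ℓ_j`. -/
theorem stmt9 (b : Module.Basis (Fin d) ℝ (EuclideanSpace ℝ (Fin d)))
    (g : EuclideanSpace ℝ (Fin d) → ℝ) (hg : ContDiff ℝ 2 g)
    (H : ℝ) (hH0 : 0 < H)
    (hHess : ∀ u : EuclideanSpace ℝ (Fin d), ‖u‖ = 1 → ∀ x,
      iteratedFDeriv ℝ 2 g x ![u, u] < H)
    (N : ℕ) (hN : 0 < N) (R : ℝ) (hR : 0 ≤ R)
    (ε : (Fin d → ℤ) → EuclideanSpace ℝ (Fin d)) (δ : (Fin d → ℤ) → ℝ)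
    (hε : ∀ j, ‖ε j‖ < 1 / N) (hδ : ∀ j, 0 < δ j ∧ δ j < 1 / (N ^ 2))
    (P : (Fin d → ℤ) → EuclideanSpace ℝ (Fin d))
    (hP : ∀ j, P j = ∑ i, ((j i : ℝ) / N) • b i)
    (hdense : ∀ x, ∃ j, ‖P j - x‖ ≤ R / N)
    (ℓ : (Fin d → ℤ) → EuclideanSpace ℝ (Fin d) → ℝ)
    (hℓ : ∀ j x, ℓ j x = ⟪gradient g (P j) - ε j, x - P j⟫ + g (P j) - δ j)
    (hle : ∀ j x, ℓ j x ≤ g x) :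
    ∀ x, 0 ≤ g x - (⨆ j, ℓ j x) ∧
      g x - (⨆ j, ℓ j x) < (R ^ 2 * H + 2 * R + 2) / (2 * N ^ 2) :=
  stmt9_general g hg H hH0 hHess N hN R ε δ hε hδ P hdense ℓ hℓ hle
end
end

section
/- On the complex torus 𝔸 = ℂ^d/(Λ ⊕ iΛ) with the translation-invariant Kähler metric induced by a positive-definite form, suppose φ̂ is the unique (up to constant, normalized by ∫φ̂ = 0) solution of the complex Monge–Ampère equation det(g_{αβ̄} + ∂²φ̂/∂z_α∂z̄_β) = C·e^{f(x)} where the datum f depends only on the real part x = Re(z). Then φ̂ is invariant under all imaginary translations z ↦ z + iy₀ (y₀ ∈ ℝ^d/Λ), i.e., ∂φ̂/∂y_i ≡ 0 for all i, and hence φ̂ depends only on x and the restriction φ(x) = φ̂(x, 0) solves the real Monge–Ampère equation det(g_{ij} + ∂²φ/∂x_i∂x_j) = C'·e^{f(x)}. -/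
open Set MeasureTheory
open scoped RealInnerProductSpace

noncomputable section

variable {d : ℕ}

/-- The fundamental domain `{x₁λ₁+⋯+x_dλ_d : 0 ≤ x_i < 1}` of the lattice. -/
def fundDomain (b : Module.Basis (Fin d) ℝ (EuclideanSpace ℝ (Fin d))) :
    Set (EuclideanSpace ℝ (Fin d)) :=
  (fun t : Fin d → ℝ => ∑ i, t i • b i) '' (Set.univ.pi fun _ => Set.Ico (0 : ℝ) 1)

/-- The second partial derivative `∂²g/∂x_i∂x_j` at `x`. -/
def pd2 (g : EuclideanSpace ℝ (Fin d) → ℝ) (i j : Fin d)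
    (x : EuclideanSpace ℝ (Fin d)) : ℝ :=
  iteratedFDeriv ℝ 2 g x ![EuclideanSpace.single i 1, EuclideanSpace.single j 1]

open scoped ComplexOrder

/-- Second derivative of a function on `ℝ^d × ℝ^d` in a pair of directions. -/
def pd2' (u : EuclideanSpace ℝ (Fin d) × EuclideanSpace ℝ (Fin d) → ℝ)
    (v w p : EuclideanSpace ℝ (Fin d) × EuclideanSpace ℝ (Fin d)) : ℝ :=
  iteratedFDeriv ℝ 2 u p ![v, w]

/-- The real coordinate direction `∂/∂x_i` on `ℝ^d × ℝ^d`. -/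
def dirX (i : Fin d) : EuclideanSpace ℝ (Fin d) × EuclideanSpace ℝ (Fin d) :=
  (EuclideanSpace.single i 1, 0)

/-- The imaginary coordinate direction `∂/∂y_i` on `ℝ^d × ℝ^d`. -/
def dirY (i : Fin d) : EuclideanSpace ℝ (Fin d) × EuclideanSpace ℝ (Fin d) :=
  (0, EuclideanSpace.single i 1)

/-- The complex Hessian entry `∂²u/∂z_α∂z̄_β
  = ¼(u_{x_αx_β} + u_{y_αy_β} + i(u_{x_αy_β} − u_{y_αx_β}))`
of a real function on `ℝ^d × ℝ^d ≅ ℂ^d` (with `z = x + iy`). -/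
def cHess (u : EuclideanSpace ℝ (Fin d) × EuclideanSpace ℝ (Fin d) → ℝ)
    (α β : Fin d) (p : EuclideanSpace ℝ (Fin d) × EuclideanSpace ℝ (Fin d)) : ℂ :=
  (1 / 4 : ℂ) * ((pd2' u (dirX α) (dirX β) p + pd2' u (dirY α) (dirY β) p : ℝ) : ℂ) +
    (Complex.I / 4) * ((pd2' u (dirX α) (dirY β) p - pd2' u (dirY α) (dirX β) p : ℝ) : ℂ)

/-! The datum `f` depends only on `x = Re z`, so translating `φ̂` by an imaginary vector `(0, y₀)`
produces another normalized periodic solution: the complex Hessian commutes with translations and,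
since `y ↦ φ̂(x, y)` is `Λ`-periodic, the integral over the fundamental domain does not change.
By uniqueness the translate is `φ̂` itself, so `φ̂(x, y) = φ(x)` with `φ(x) = φ̂(x, 0)`. For such a
function all derivatives in the `y`-directions vanish, the complex Hessian reduces to `¼ ∂²φ/∂x∂x`,
and the complex equation at `(x, 0)` becomes the real one after multiplying the matrix by `4`. -/

open scoped Pointwise

section Lattice

variable {ι E F : Type*} [Finite ι] [NormedAddCommGroup E] [NormedSpace ℝ E]
  [NormedAddCommGroup F]

theorem ZSpan.setIntegral_fundamentalDomain_comp_add_right [NormedSpace ℝ F] [MeasurableSpace E]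
    [BorelSpace E] (μ : Measure E) [μ.IsAddLeftInvariant] (b : Module.Basis ι ℝ E) {g : E → F}
    (hg : ∀ l ∈ Submodule.span ℤ (range b), ∀ y, g (y + l) = g y) (c : E) :
    ∫ y in fundamentalDomain b, g (y + c) ∂μ = ∫ y in fundamentalDomain b, g y ∂μ := by
  have : Countable (Submodule.span ℤ (range b)).toAddSubgroup :=
    inferInstanceAs (Countable (Submodule.span ℤ (range b)))
  have hF := ZSpan.isAddFundamentalDomain' b μ
  simp_rw [add_comm _ c]
  calc ∫ y in fundamentalDomain b, g (c + y) ∂μ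
      = ∫ y in c +ᵥ fundamentalDomain b, g y ∂μ := by
        rw [← image_vadd]
        exact ((measurePreserving_add_left μ c).setIntegral_image_emb
          (measurableEmbedding_addLeft c) g _).symm
    _ = ∫ y in fundamentalDomain b, g y ∂μ :=
        (hF.vadd_of_comm c).setIntegral_eq hF fun l y => by
          rw [AddSubgroup.vadd_def, vadd_eq_add, add_comm]
          exact hg l l.2 y

variable [FiniteDimensional ℝ E] [MeasureSpace E] [BorelSpace E]

theorem ZSpan.integrableOn_fundamentalDomain_prod
    [IsFiniteMeasureOnCompacts (volume : Measure E)] (b : Module.Basis ι ℝ E) {u : E × E → F}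
    (hu : Continuous u) : IntegrableOn u (fundamentalDomain b ×ˢ fundamentalDomain b) := by
  have hbdd := (fundamentalDomain_isBounded b).prod (fundamentalDomain_isBounded b)
  exact (hu.locallyIntegrable.integrableOn_isCompact hbdd.isCompact_closure).mono_set
    subset_closure

theorem ZSpan.setIntegral_fundamentalDomain_prod_comp_add_snd
    [NormedSpace ℝ F] [(volume : Measure E).IsAddHaarMeasure] (b : Module.Basis ι ℝ E)
    {u : E × E → F} (hu : Continuous u)
    (hper : ∀ l ∈ Submodule.span ℤ (range b), ∀ x y, u (x, y + l) = u (x, y)) (c : E) :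
    ∫ p in fundamentalDomain b ×ˢ fundamentalDomain b, u (p + (0, c)) =
      ∫ p in fundamentalDomain b ×ˢ fundamentalDomain b, u p := by
  have hu' : Continuous fun p => u (p + (0, c)) := hu.comp (continuous_add_const _)
  rw [Measure.volume_eq_prod, setIntegral_prod _ (integrableOn_fundamentalDomain_prod b hu'),
    setIntegral_prod _ (integrableOn_fundamentalDomain_prod b hu)]
  refine setIntegral_congr_fun (fundamentalDomain_measurableSet b) fun x _ => ?_
  simpa using setIntegral_fundamentalDomain_comp_add_right (g := fun y => u (x, y)) volume b
    (fun l hl y => hper l hl x y) c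

end Lattice

theorem mem_latticeOf_of_mem_span (b : Module.Basis (Fin d) ℝ (EuclideanSpace ℝ (Fin d)))
    {v : EuclideanSpace ℝ (Fin d)} (hv : v ∈ Submodule.span ℤ (range b)) : v ∈ latticeOf b := by
  obtain ⟨n, rfl⟩ := (Submodule.mem_span_range_iff_exists_fun ℤ).mp hv
  exact ⟨n, by simp only [Int.cast_smul_eq_zsmul]⟩

theorem fundDomain_eq_fundamentalDomain
    (b : Module.Basis (Fin d) ℝ (EuclideanSpace ℝ (Fin d))) :
    fundDomain b = ZSpan.fundamentalDomain b := by
  ext x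
  constructor
  · rintro ⟨t, ht, rfl⟩ i
    rw [b.repr_sum_self]
    exact ht i (mem_univ i)
  · intro hx
    exact ⟨fun i => b.repr x i, fun i _ => hx i, b.sum_repr x⟩

theorem cHess_comp_add_right (u : EuclideanSpace ℝ (Fin d) × EuclideanSpace ℝ (Fin d) → ℝ)
    (c p : EuclideanSpace ℝ (Fin d) × EuclideanSpace ℝ (Fin d)) (α β : Fin d) :
    cHess (fun q => u (q + c)) α β p = cHess u α β (p + c) := by
  simp only [cHess, pd2', iteratedFDeriv_comp_add_right]

section FunctionOfRealPart

variable {g : EuclideanSpace ℝ (Fin d) → ℝ}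

theorem pd2'_comp_fst (hg : ContDiff ℝ 2 g)
    (v w p : EuclideanSpace ℝ (Fin d) × EuclideanSpace ℝ (Fin d)) :
    pd2' (fun q => g q.1) v w p = iteratedFDeriv ℝ 2 g p.1 ![v.1, w.1] := by
  rw [pd2', show (fun q : EuclideanSpace ℝ (Fin d) × EuclideanSpace ℝ (Fin d) => g q.1) =
      g ∘ ContinuousLinearMap.fst ℝ _ _ from rfl,
    ContinuousLinearMap.iteratedFDeriv_comp_right _ hg p le_rfl,
    ContinuousMultilinearMap.compContinuousLinearMap_apply]
  congr 1
  ext i : 1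
  fin_cases i <;> rfl

theorem cHess_comp_fst (hg : ContDiff ℝ 2 g) (α β : Fin d)
    (p : EuclideanSpace ℝ (Fin d) × EuclideanSpace ℝ (Fin d)) :
    cHess (fun q => g q.1) α β p = ((pd2 g α β p.1 / 4 : ℝ) : ℂ) := by
  have hXX : pd2' (fun q => g q.1) (dirX α) (dirX β) p = pd2 g α β p.1 := by
    rw [pd2'_comp_fst hg]; rfl
  have hYl : ∀ γ w, pd2' (fun q => g q.1) (dirY γ) w p = 0 := fun γ w => by
    rw [pd2'_comp_fst hg]; exact (iteratedFDeriv ℝ 2 g p.1).map_coord_zero 0 rfl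
  have hYr : ∀ v γ, pd2' (fun q => g q.1) v (dirY γ) p = 0 := fun v γ => by
    rw [pd2'_comp_fst hg]; exact (iteratedFDeriv ℝ 2 g p.1).map_coord_zero 1 rfl
  rw [cHess, hXX, hYl, hYr, hYl]
  push_cast
  ring

theorem det_add_cHess_comp_fst (hg : ContDiff ℝ 2 g) (G : Matrix (Fin d) (Fin d) ℝ)
    (p : EuclideanSpace ℝ (Fin d) × EuclideanSpace ℝ (Fin d)) :
    (Matrix.of fun α β => (G α β : ℂ) + cHess (fun q => g q.1) α β p).det =
      (((4 : ℝ) ^ d)⁻¹ * (Matrix.of fun i j => 4 * G i j + pd2 g i j p.1).det : ℝ) := by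
  have hM : (Matrix.of fun α β => (G α β : ℂ) + cHess (fun q => g q.1) α β p) =
      Complex.ofRealHom.mapMatrix
        ((4 : ℝ)⁻¹ • Matrix.of fun i j => 4 * G i j + pd2 g i j p.1) := by
    ext α β
    simp only [Matrix.of_apply, cHess_comp_fst hg, RingHom.mapMatrix_apply, Matrix.map_apply,
      Matrix.smul_apply, smul_eq_mul, Complex.ofRealHom_eq_coe]
    push_cast
    ring
  rw [hM, ← RingHom.map_det, Matrix.det_smul, Fintype.card_fin, inv_pow]
  rfl

end FunctionOfRealPart

theorem stmt15_general (b : Module.Basis (Fin d) ℝ (EuclideanSpace ℝ (Fin d)))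
    (G : Matrix (Fin d) (Fin d) ℝ)
    (C : ℝ)
    (f : EuclideanSpace ℝ (Fin d) → ℝ)
    (φh : EuclideanSpace ℝ (Fin d) × EuclideanSpace ℝ (Fin d) → ℝ)
    (hreg : ContDiff ℝ 3 φh)
    (hper : ∀ l ∈ latticeOf b, ∀ x y, φh (x + l, y) = φh (x, y) ∧ φh (x, y + l) = φh (x, y))
    (hpos : ∀ p, (Matrix.of fun α β => ((G α β : ℂ) + cHess φh α β p)).PosDef)
    (heq : ∀ p, (Matrix.of fun α β => ((G α β : ℂ) + cHess φh α β p)).det =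
      ((C * Real.exp (f p.1) : ℝ) : ℂ))
    (hnorm : ∫ p in (fundDomain b) ×ˢ (fundDomain b), φh p = 0)
    (huniq : ∀ ψ : EuclideanSpace ℝ (Fin d) × EuclideanSpace ℝ (Fin d) → ℝ,
      ContDiff ℝ 3 ψ →
      (∀ l ∈ latticeOf b, ∀ x y, ψ (x + l, y) = ψ (x, y) ∧ ψ (x, y + l) = ψ (x, y)) →
      (∀ p, (Matrix.of fun α β => ((G α β : ℂ) + cHess ψ α β p)).PosDef) →
      (∀ p, (Matrix.of fun α β => ((G α β : ℂ) + cHess ψ α β p)).det =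
        ((C * Real.exp (f p.1) : ℝ) : ℂ)) →
      (∫ p in (fundDomain b) ×ˢ (fundDomain b), ψ p = 0) → ψ = φh) :
    (∀ x y y', φh (x, y) = φh (x, y')) ∧
    (∀ x, (Matrix.of fun i j => 4 * G i j + pd2 (fun x' => φh (x', 0)) i j x).det =
      4 ^ d * C * Real.exp (f x)) := by
  have hshift : ∀ y₀ x y, φh (x, y + y₀) = φh (x, y) := by
    intro y₀
    have htransl : (fun p => φh (p + (0, y₀))) = φh := by
      refine huniq _ (hreg.comp (contDiff_id.add contDiff_const)) (fun l hl x y => ?_)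
        (fun p => ?_) (fun p => ?_) ?_
      · simpa [add_right_comm] using hper l hl x (y + y₀)
      · simpa only [cHess_comp_add_right] using hpos (p + (0, y₀))
      · simp only [cHess_comp_add_right]
        rw [heq, Prod.fst_add, add_zero]
      · rw [fundDomain_eq_fundamentalDomain] at hnorm ⊢
        rw [ZSpan.setIntegral_fundamentalDomain_prod_comp_add_snd b hreg.continuous
          (fun l hl x y => (hper l (mem_latticeOf_of_mem_span b hl) x y).2), hnorm]
    intro x y
    simpa using congrFun htransl (x, y)
  have hφ : φh = fun q => φh (q.1, 0) := funext fun q => by simpa using hshift q.2 q.1 0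
  refine ⟨fun x y y' => by rw [hφ], fun x => ?_⟩
  have hdet := heq (x, 0)
  have hφreg : ContDiff ℝ 2 fun x => φh (x, 0) :=
    (hreg.comp (contDiff_id.prodMk contDiff_const)).of_le (by norm_num)
  rw [hφ, det_add_cHess_comp_fst hφreg G] at hdet
  have hdet' := Complex.ofReal_injective hdet
  field_simp at hdet'
  linear_combination hdet'

/-- On the complex torus `𝔸 = ℂ^d/(Λ ⊕ iΛ)` with flat Kähler metric given by a constant
positive-definite matrix `G`, the unique normalized solution `φ̂` of the complex
Monge–Ampère equation `det(G + ∂²φ̂/∂z∂z̄) = C·e^{f(x)}` with datum depending only on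
`x = Re z` is invariant under all imaginary translations, and its restriction
`φ(x) = φ̂(x,0)` solves the real Monge–Ampère equation
`det(4G + ∂²φ/∂x∂x) = 4^d·C·e^{f(x)}`. -/
theorem stmt15 (b : Module.Basis (Fin d) ℝ (EuclideanSpace ℝ (Fin d)))
    (G : Matrix (Fin d) (Fin d) ℝ) (hGs : G.IsSymm) (hGp : G.PosDef)
    (C : ℝ) (hC : 0 < C)
    (f : EuclideanSpace ℝ (Fin d) → ℝ)
    (hfper : ∀ l ∈ latticeOf b, ∀ x, f (x + l) = f x)
    (φh : EuclideanSpace ℝ (Fin d) × EuclideanSpace ℝ (Fin d) → ℝ)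
    (hreg : ContDiff ℝ 3 φh)
    (hper : ∀ l ∈ latticeOf b, ∀ x y, φh (x + l, y) = φh (x, y) ∧ φh (x, y + l) = φh (x, y))
    (hpos : ∀ p, (Matrix.of fun α β => ((G α β : ℂ) + cHess φh α β p)).PosDef)
    (heq : ∀ p, (Matrix.of fun α β => ((G α β : ℂ) + cHess φh α β p)).det =
      ((C * Real.exp (f p.1) : ℝ) : ℂ))
    (hnorm : ∫ p in (fundDomain b) ×ˢ (fundDomain b), φh p = 0)
    (huniq : ∀ ψ : EuclideanSpace ℝ (Fin d) × EuclideanSpace ℝ (Fin d) → ℝ,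
      ContDiff ℝ 3 ψ →
      (∀ l ∈ latticeOf b, ∀ x y, ψ (x + l, y) = ψ (x, y) ∧ ψ (x, y + l) = ψ (x, y)) →
      (∀ p, (Matrix.of fun α β => ((G α β : ℂ) + cHess ψ α β p)).PosDef) →
      (∀ p, (Matrix.of fun α β => ((G α β : ℂ) + cHess ψ α β p)).det =
        ((C * Real.exp (f p.1) : ℝ) : ℂ)) →
      (∫ p in (fundDomain b) ×ˢ (fundDomain b), ψ p = 0) → ψ = φh) :
    (∀ x y y', φh (x, y) = φh (x, y')) ∧
    (∀ x, (Matrix.of fun i j => 4 * G i j + pd2 (fun x' => φh (x', 0)) i j x).det =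
      4 ^ d * C * Real.exp (f x)) :=
  stmt15_general b G C f φh hreg hper hpos heq hnorm huniq
end
end
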